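/- arXiv:1511.06190 — 7 statements merged into one kernel-verified Lean document; each statement's English description precedes it below -/
import Mathlib

section
/- For all real x₁, x₂, the integral over ρ ∈ (-1,1) of (1/2)·(2π√(1-ρ²))⁻¹·exp(-(x₁²+x₂²-2ρx₁x₂)/(2(1-ρ²))) dρ equals (1/2)·(1-Φ(max(|x₁|,|x₂|))), where Φ is the standard normal CDF. -/
/-!
Reflecting `ρ ↦ -ρ` reduces to `x₁, x₂ ≥ 0`; put `a = max x₁ x₂`. Against the arcsine weight
`dρ / √(1 - ρ²)`, write `exp (-s² / 2) = ∫_{t > s} t e^{-t²/2} dt` and exchange the integrals.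
For fixed `t > a`, writing `xᵢ = t cos φᵢ`, the set of `ρ` with
`x₁² + x₂² - 2ρx₁x₂ < t² (1 - ρ²)` is the interval between `cos (φ₁ + φ₂)` and `cos (φ₁ - φ₂)`,
of arcsine measure `2 min φᵢ = 2 arccos (a / t)`; for `t ≤ a` it is empty. Expanding
`arccos (a / t) = ∫_a^t dv / √(t² - v²)` and exchanging once more, the substitution
`t = √(w² + v²)` turns the inner integral into `√(2π) e^{-v²/2}`, so the `ρ`-integral of
`2π f` is `√(2π) ∫_a^∞ e^{-v²/2} dv = 2π (1 - Φ(a))`.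
-/

open Real MeasureTheory

/-- The standard normal CDF. -/
noncomputable def stdNormalCDF (t : ℝ) : ℝ :=
  ∫ s in Set.Iic t, (Real.sqrt (2 * Real.pi))⁻¹ * Real.exp (-s ^ 2 / 2)

open Set Filter Topology
open scoped ENNReal

lemma exp_neg_sq_div_two (v : ℝ) : exp (-v ^ 2 / 2) = exp (-(1 / 2) * v ^ 2) := by
  ring_nf

lemma integrable_exp_neg_sq_div_two : Integrable fun v : ℝ => exp (-v ^ 2 / 2) := by
  simpa only [exp_neg_sq_div_two] using integrable_exp_neg_mul_sq (b := 1 / 2) (by norm_num)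

lemma integral_exp_neg_sq_div_two : ∫ v : ℝ, exp (-v ^ 2 / 2) = √(2 * π) := by
  simp only [exp_neg_sq_div_two, integral_gaussian]
  congr 1; field_simp

lemma integral_Ioi_zero_exp_neg_sq_div_two :
    ∫ v in Ioi (0 : ℝ), exp (-v ^ 2 / 2) = √(2 * π) / 2 := by
  simp only [exp_neg_sq_div_two, integral_gaussian_Ioi]
  congr 2; field_simp

lemma one_sub_stdNormalCDF (b : ℝ) :
    1 - stdNormalCDF b = (√(2 * π))⁻¹ * ∫ v in Ioi b, exp (-v ^ 2 / 2) := by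
  have hsplit := intervalIntegral.integral_Iic_add_Ioi (b := b)
    integrable_exp_neg_sq_div_two.integrableOn integrable_exp_neg_sq_div_two.integrableOn
  rw [integral_exp_neg_sq_div_two] at hsplit
  have hinv : (√(2 * π))⁻¹ * √(2 * π) = 1 := inv_mul_cancel₀ (by positivity)
  rw [stdNormalCDF, integral_const_mul]
  linear_combination -hinv - (√(2 * π))⁻¹ * hsplit

lemma hasDerivAt_neg_exp_neg_sq_div_two (t : ℝ) :
    HasDerivAt (fun t : ℝ => -exp (-t ^ 2 / 2)) (t * exp (-t ^ 2 / 2)) t := by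
  refine (((hasDerivAt_pow 2 t).neg.div_const 2).exp).neg.congr_deriv ?_
  simp only [Pi.neg_apply]
  ring

lemma setLIntegral_Ioi_mul_exp_neg_sq_div_two {s : ℝ} (hs : 0 ≤ s) :
    ∫⁻ t in Ioi s, ENNReal.ofReal (t * exp (-t ^ 2 / 2)) = ENNReal.ofReal (exp (-s ^ 2 / 2)) := by
  have hderiv : ∀ t ∈ Ici s, HasDerivAt (fun t : ℝ => -exp (-t ^ 2 / 2))
      (t * exp (-t ^ 2 / 2)) t := fun t _ => hasDerivAt_neg_exp_neg_sq_div_two t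
  have hnonneg : ∀ t ∈ Ioi s, 0 ≤ t * exp (-t ^ 2 / 2) :=
    fun t ht => mul_nonneg (hs.trans (le_of_lt ht)) (exp_pos _).le
  have hlim : Tendsto (fun t : ℝ => -exp (-t ^ 2 / 2)) atTop (𝓝 (-0)) := by
    refine (tendsto_exp_atBot.comp ?_).neg
    simp only [neg_div]
    exact tendsto_neg_atTop_atBot.comp ((tendsto_pow_atTop two_ne_zero).atTop_div_const two_pos)
  rw [← ofReal_integral_eq_lintegral_ofReal
      (integrableOn_Ioi_deriv_of_nonneg' hderiv hnonneg hlim)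
      ((ae_restrict_iff' measurableSet_Ioi).2 (Eventually.of_forall hnonneg)),
    integral_Ioi_of_hasDerivAt_of_nonneg' hderiv hnonneg hlim]
  ring_nf

lemma ofReal_exp_neg_div_eq_setLIntegral {q u : ℝ} (hq : 0 ≤ q) (hu : 0 < u) :
    ENNReal.ofReal (exp (-q / (2 * u))) =
      ∫⁻ t in {t | q < t ^ 2 * u} ∩ Ioi 0, ENNReal.ofReal (t * exp (-t ^ 2 / 2)) := by
  have hset : {t | q < t ^ 2 * u} ∩ Ioi 0 = Ioi √(q / u) := by
    ext t
    rw [mem_inter_iff, mem_ofPred_eq, mem_Ioi, mem_Ioi]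
    constructor
    · rintro ⟨h, ht⟩
      exact (sqrt_lt' ht).2 ((div_lt_iff₀ hu).2 h)
    · intro h
      have ht : 0 < t := (sqrt_nonneg _).trans_lt h
      exact ⟨(div_lt_iff₀ hu).1 ((sqrt_lt' ht).1 h), ht⟩
  rw [hset, setLIntegral_Ioi_mul_exp_neg_sq_div_two (sqrt_nonneg _), sq_sqrt (div_nonneg hq hu.le)]
  ring_nf

lemma lintegral_setLIntegral_swap {α β : Type*} [MeasurableSpace α] [MeasurableSpace β]
    {μ : Measure α} {ν : Measure β} [SFinite μ] [SFinite ν] {s : Set (α × β)}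
    (hs : MeasurableSet s) {f : α → β → ℝ≥0∞} (hf : Measurable (Function.uncurry f)) :
    ∫⁻ x, ∫⁻ y in {y | (x, y) ∈ s}, f x y ∂ν ∂μ =
      ∫⁻ y, ∫⁻ x in {x | (x, y) ∈ s}, f x y ∂μ ∂ν := by
  have h₁ : ∀ x, ∫⁻ y in {y | (x, y) ∈ s}, f x y ∂ν =
      ∫⁻ y, s.indicator (Function.uncurry f) (x, y) ∂ν :=
    fun x => (lintegral_indicator (measurable_prodMk_left hs) _).symm
  have h₂ : ∀ y, ∫⁻ x in {x | (x, y) ∈ s}, f x y ∂μ =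
      ∫⁻ x, s.indicator (Function.uncurry f) (x, y) ∂μ :=
    fun y => (lintegral_indicator (measurable_prodMk_right hs) _).symm
  simp_rw [h₁, h₂]
  exact lintegral_lintegral_swap ((hf.indicator hs).aemeasurable)

lemma cos_image_Ioo_arccos {x y : ℝ} (hx : x ∈ Icc (-1) 1) (hy : y ∈ Icc (-1) 1) :
    cos '' Ioo (arccos y) (arccos x) = Ioo x y := by
  ext ρ
  constructor
  · rintro ⟨θ, ⟨hyθ, hθx⟩, rfl⟩
    have hθ : θ ∈ Icc 0 π := ⟨(arccos_nonneg y).trans hyθ.le, hθx.le.trans (arccos_le_pi x)⟩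
    have hmem : ∀ z, arccos z ∈ Icc 0 π := fun z => ⟨arccos_nonneg z, arccos_le_pi z⟩
    constructor
    · simpa only [cos_arccos hx.1 hx.2] using strictAntiOn_cos hθ (hmem x) hθx
    · simpa only [cos_arccos hy.1 hy.2] using strictAntiOn_cos (hmem y) hθ hyθ
  · rintro ⟨hxρ, hρy⟩
    have hρ : ρ ∈ Icc (-1) 1 := ⟨hx.1.trans hxρ.le, hρy.le.trans hy.2⟩
    exact ⟨arccos ρ, ⟨strictAntiOn_arccos hρ hy hρy, strictAntiOn_arccos hx hρ hxρ⟩,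
      cos_arccos hρ.1 hρ.2⟩

lemma setLIntegral_Ioo_inv_sqrt_sq_sub_sq {r a b : ℝ} (hr : 0 < r) (ha : a ∈ Icc (-r) r)
    (hb : b ∈ Icc (-r) r) :
    ∫⁻ v in Ioo a b, ENNReal.ofReal (√(r ^ 2 - v ^ 2))⁻¹ =
      ENNReal.ofReal (arccos (a / r) - arccos (b / r)) := by
  set s := Ioo (arccos (b / r)) (arccos (a / r))
  have hs : s ⊆ Ioo 0 π := fun θ hθ =>
    ⟨(arccos_nonneg _).trans_lt hθ.1, hθ.2.trans_le (arccos_le_pi _)⟩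
  have hunit : ∀ c ∈ Icc (-r) r, c / r ∈ Icc (-1) 1 := fun c hc =>
    ⟨by rw [le_div_iff₀ hr]; linarith [hc.1], by rw [div_le_iff₀ hr]; linarith [hc.2]⟩
  have himage : (fun θ => r * cos θ) '' s = Ioo a b := by
    rw [← image_image (fun x => r * x) cos, cos_image_Ioo_arccos (hunit a ha) (hunit b hb),
      image_mul_left_Ioo hr, mul_div_cancel₀ _ hr.ne', mul_div_cancel₀ _ hr.ne']
  have hderiv : ∀ θ ∈ s, HasDerivWithinAt (fun θ => r * cos θ) (r * -sin θ) s θ :=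
    fun θ _ => ((hasDerivAt_cos θ).const_mul r).hasDerivWithinAt
  have hinj : InjOn (fun θ => r * cos θ) s := fun θ₁ h₁ θ₂ h₂ h =>
    injOn_cos (Ioo_subset_Icc_self (hs h₁)) (Ioo_subset_Icc_self (hs h₂))
      (mul_left_cancel₀ hr.ne' h)
  have hjac : ∀ θ ∈ s,
      ENNReal.ofReal |r * -sin θ| * ENNReal.ofReal (√(r ^ 2 - (r * cos θ) ^ 2))⁻¹ = 1 := by
    intro θ hθ
    have hpos : 0 < r * sin θ := mul_pos hr (sin_pos_of_mem_Ioo (hs hθ))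
    have hsq : r ^ 2 - (r * cos θ) ^ 2 = (r * sin θ) ^ 2 := by
      linear_combination (-r ^ 2) * sin_sq_add_cos_sq θ
    rw [hsq, sqrt_sq hpos.le, mul_neg, abs_neg, abs_of_pos hpos, ← ENNReal.ofReal_mul hpos.le,
      mul_inv_cancel₀ hpos.ne', ENNReal.ofReal_one]
  rw [← himage, lintegral_image_eq_lintegral_abs_deriv_mul measurableSet_Ioo hderiv hinj,
    setLIntegral_congr_fun measurableSet_Ioo hjac, setLIntegral_one, volume_Ioo]

lemma setLIntegral_Ioo_inv_sqrt_sq_sub_sq_eq_arccos {r a : ℝ} (hr : 0 < r) (ha : -r ≤ a) :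
    ∫⁻ v in Ioo a r, ENNReal.ofReal (√(r ^ 2 - v ^ 2))⁻¹ = ENNReal.ofReal (arccos (a / r)) := by
  rcases le_or_gt a r with har | har
  · rw [setLIntegral_Ioo_inv_sqrt_sq_sub_sq hr ⟨ha, har⟩ ⟨by linarith, le_rfl⟩, div_self hr.ne',
      arccos_one, sub_zero]
  · rw [Ioo_eq_empty_of_le har.le, Measure.restrict_empty, lintegral_zero_measure,
      arccos_of_one_le ((one_le_div hr).2 har.le), ENNReal.ofReal_zero]

lemma setLIntegral_Ioi_inv_sqrt_sq_sub_sq_mul_exp {v : ℝ} (hv : 0 ≤ v) :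
    ∫⁻ t in Ioi v, ENNReal.ofReal (√(t ^ 2 - v ^ 2))⁻¹ *
        ENNReal.ofReal (2 * (t * exp (-t ^ 2 / 2))) =
      ENNReal.ofReal (√(2 * π) * exp (-v ^ 2 / 2)) := by
  have hpos : ∀ w, 0 < w → 0 < √(w ^ 2 + v ^ 2) := fun w hw => sqrt_pos.2 (by positivity)
  have hderiv : ∀ w ∈ Ioi (0 : ℝ), HasDerivWithinAt (fun w => √(w ^ 2 + v ^ 2))
      (w / √(w ^ 2 + v ^ 2)) (Ioi 0) w := fun w (hw : 0 < w) => by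
    refine (((hasDerivAt_pow 2 w).add_const (v ^ 2)).sqrt (by positivity)).hasDerivWithinAt
      |>.congr_deriv ?_
    field_simp
    norm_num
  have hinj : InjOn (fun w => √(w ^ 2 + v ^ 2)) (Ioi 0) := fun w₁ h₁ w₂ h₂ h => by
    rw [sqrt_inj (by positivity) (by positivity), add_left_inj] at h
    exact (pow_left_inj₀ (le_of_lt h₁) (le_of_lt h₂) two_ne_zero).mp h
  have himage : (fun w => √(w ^ 2 + v ^ 2)) '' Ioi 0 = Ioi v := by
    ext t
    constructor
    · rintro ⟨w, hw, rfl⟩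
      exact (lt_sqrt hv).2 (by nlinarith [mem_Ioi.mp hw])
    · intro (ht : v < t)
      have ht' : 0 < t ^ 2 - v ^ 2 := by nlinarith
      refine ⟨√(t ^ 2 - v ^ 2), sqrt_pos.2 ht', ?_⟩
      show √(√(t ^ 2 - v ^ 2) ^ 2 + v ^ 2) = t
      rw [sq_sqrt ht'.le, sub_add_cancel, sqrt_sq (hv.trans ht.le)]
  have hjac : ∀ w ∈ Ioi (0 : ℝ), ENNReal.ofReal |w / √(w ^ 2 + v ^ 2)| *
      (ENNReal.ofReal (√(√(w ^ 2 + v ^ 2) ^ 2 - v ^ 2))⁻¹ *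
        ENNReal.ofReal (2 * (√(w ^ 2 + v ^ 2) * exp (-√(w ^ 2 + v ^ 2) ^ 2 / 2)))) =
      ENNReal.ofReal (2 * exp (-v ^ 2 / 2) * exp (-w ^ 2 / 2)) := fun w (hw : 0 < w) => by
    have hs := hpos w hw
    rw [sq_sqrt (by positivity), add_sub_cancel_right, sqrt_sq hw.le,
      abs_of_pos (div_pos hw hs), ← ENNReal.ofReal_mul (inv_nonneg.2 hw.le),
      ← ENNReal.ofReal_mul (div_pos hw hs).le]
    congr 1
    rw [mul_assoc 2, ← exp_add]
    field_simp
    ring_nf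
  rw [← himage, lintegral_image_eq_lintegral_abs_deriv_mul measurableSet_Ioi hderiv hinj,
    setLIntegral_congr_fun measurableSet_Ioi hjac,
    ← ofReal_integral_eq_lintegral_ofReal
      ((integrable_exp_neg_sq_div_two.const_mul _).integrableOn)
      (Eventually.of_forall fun w => by positivity),
    integral_const_mul, integral_Ioi_zero_exp_neg_sq_div_two]
  ring_nf

lemma setOf_quad_lt_eq_Ioo {x₁ x₂ t : ℝ} (ht : 0 < t) (h₁ : |x₁| ≤ t) (h₂ : |x₂| ≤ t) :
    {ρ : ℝ | x₁ ^ 2 + x₂ ^ 2 - 2 * ρ * x₁ * x₂ < t ^ 2 * (1 - ρ ^ 2)} =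
      Ioo (cos (arccos (x₁ / t) + arccos (x₂ / t)))
        (cos (arccos (x₁ / t) - arccos (x₂ / t))) := by
  set φ₁ := arccos (x₁ / t)
  set φ₂ := arccos (x₂ / t)
  have hcos : ∀ x, |x| ≤ t → x = t * cos (arccos (x / t)) := fun x hx => by
    obtain ⟨hl, hr⟩ := abs_le.mp hx
    rw [cos_arccos (by rw [le_div_iff₀ ht]; linarith) (by rw [div_le_iff₀ ht]; linarith)]
    field_simp
  have hsin : ∀ x, 0 ≤ sin (arccos x) := fun x =>
    sin_nonneg_of_nonneg_of_le_pi (arccos_nonneg x) (arccos_le_pi x)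
  have hfactor : ∀ ρ, x₁ ^ 2 + x₂ ^ 2 - 2 * ρ * x₁ * x₂ - t ^ 2 * (1 - ρ ^ 2) =
      t ^ 2 * ((ρ - cos (φ₁ + φ₂)) * (ρ - cos (φ₁ - φ₂))) := fun ρ => by
    rw [cos_add, cos_sub, hcos x₁ h₁, hcos x₂ h₂]
    linear_combination t ^ 2 * sin φ₂ ^ 2 * sin_sq_add_cos_sq φ₁ +
      t ^ 2 * (1 - cos φ₁ ^ 2) * sin_sq_add_cos_sq φ₂
  have hle : cos (φ₁ + φ₂) ≤ cos (φ₁ - φ₂) := by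
    rw [cos_add, cos_sub]
    nlinarith [mul_nonneg (hsin (x₁ / t)) (hsin (x₂ / t))]
  ext ρ
  rw [mem_ofPred_eq, ← sub_neg, hfactor ρ, mem_Ioo]
  constructor
  · intro h
    have hprod := neg_of_mul_neg_right h (sq_nonneg t)
    constructor <;> nlinarith
  · rintro ⟨hl, hu⟩
    exact mul_neg_of_pos_of_neg (by positivity)
      (mul_neg_of_pos_of_neg (sub_pos.2 hl) (sub_neg.2 hu))

lemma setLIntegral_levelSet_inv_sqrt_one_sub_sq {x₁ x₂ t : ℝ} (hx₁ : 0 ≤ x₁) (hx₂ : 0 ≤ x₂)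
    (ht : 0 < t) :
    ∫⁻ ρ in {ρ : ℝ | x₁ ^ 2 + x₂ ^ 2 - 2 * ρ * x₁ * x₂ < t ^ 2 * (1 - ρ ^ 2)} ∩ Ioo (-1) 1,
      ENNReal.ofReal (√(1 - ρ ^ 2))⁻¹ = ENNReal.ofReal (2 * arccos (max x₁ x₂ / t)) := by
  rcases le_or_gt t (max x₁ x₂) with hmax | hmax
  · have hempty : {ρ : ℝ | x₁ ^ 2 + x₂ ^ 2 - 2 * ρ * x₁ * x₂ < t ^ 2 * (1 - ρ ^ 2)} ∩
        Ioo (-1) 1 = ∅ := by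
      refine eq_empty_of_forall_notMem fun ρ ⟨hlt, hρ₁, hρ₂⟩ => ?_
      rw [mem_ofPred_eq] at hlt
      have hρ : 0 ≤ 1 - ρ ^ 2 := by nlinarith
      rcases le_max_iff.mp hmax with h | h
      · nlinarith [sq_nonneg (x₂ - ρ * x₁), mul_le_mul_of_nonneg_right
          (pow_le_pow_left₀ ht.le h 2) hρ]
      · nlinarith [sq_nonneg (x₁ - ρ * x₂), mul_le_mul_of_nonneg_right
          (pow_le_pow_left₀ ht.le h 2) hρ]
    rw [hempty, Measure.restrict_empty, lintegral_zero_measure,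
      arccos_of_one_le ((one_le_div ht).mpr hmax), mul_zero, ENNReal.ofReal_zero]
  obtain ⟨h₁, h₂⟩ := max_lt_iff.mp hmax
  have hφ : ∀ x, 0 ≤ x → arccos (x / t) ∈ Icc 0 (π / 2) := fun x hx =>
    ⟨arccos_nonneg _, arccos_le_pi_div_two.mpr (div_nonneg hx ht.le)⟩
  obtain ⟨hφ₁, hφ₁'⟩ := hφ x₁ hx₁
  obtain ⟨hφ₂, hφ₂'⟩ := hφ x₂ hx₂
  have hunit := setLIntegral_Ioo_inv_sqrt_sq_sub_sq one_pos
    (a := cos (arccos (x₁ / t) + arccos (x₂ / t)))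
    (b := cos (arccos (x₁ / t) - arccos (x₂ / t)))
    (by simpa using cos_mem_Icc _) (by simpa using cos_mem_Icc _)
  simp only [one_pow, div_one] at hunit
  rw [setOf_quad_lt_eq_Ioo ht ((abs_of_nonneg hx₁).trans_lt h₁).le
      ((abs_of_nonneg hx₂).trans_lt h₂).le,
    inter_eq_left.mpr (Ioo_subset_Ioo (neg_one_le_cos _) (cos_le_one _)), hunit,
    arccos_cos (by linarith) (by linarith), ← cos_abs,
    arccos_cos (abs_nonneg _) (by rw [abs_le]; constructor <;> linarith),
    ← max_div_div_right ht.le, antitone_arccos.map_max]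
  congr 1
  rcases le_total (arccos (x₁ / t)) (arccos (x₂ / t)) with h | h
  · rw [abs_of_nonpos (sub_nonpos.2 h), min_eq_left h]; ring
  · rw [abs_of_nonneg (sub_nonneg.2 h), min_eq_right h]; ring

noncomputable def bivariateNormalDensity (ρ x₁ x₂ : ℝ) : ℝ :=
  (2 * π * √(1 - ρ ^ 2))⁻¹ * exp (-(x₁ ^ 2 + x₂ ^ 2 - 2 * ρ * x₁ * x₂) / (2 * (1 - ρ ^ 2)))

lemma setLIntegral_inv_sqrt_mul_exp_eq_arccos {x₁ x₂ : ℝ} (hx₁ : 0 ≤ x₁) (hx₂ : 0 ≤ x₂) :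
    ∫⁻ ρ in Ioo (-1) 1, ENNReal.ofReal (√(1 - ρ ^ 2))⁻¹ *
        ENNReal.ofReal (exp (-(x₁ ^ 2 + x₂ ^ 2 - 2 * ρ * x₁ * x₂) / (2 * (1 - ρ ^ 2)))) =
      ∫⁻ t in Ioi 0, ENNReal.ofReal (2 * arccos (max x₁ x₂ / t)) *
        ENNReal.ofReal (t * exp (-t ^ 2 / 2)) := by
  have hslice₁ : ∀ ρ, MeasurableSet
      {t : ℝ | x₁ ^ 2 + x₂ ^ 2 - 2 * ρ * x₁ * x₂ < t ^ 2 * (1 - ρ ^ 2)} := fun ρ =>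
    measurableSet_lt (by fun_prop) (by fun_prop)
  have hslice₂ : ∀ t, MeasurableSet
      {ρ : ℝ | x₁ ^ 2 + x₂ ^ 2 - 2 * ρ * x₁ * x₂ < t ^ 2 * (1 - ρ ^ 2)} := fun t =>
    measurableSet_lt (by fun_prop) (by fun_prop)
  calc
    _ = ∫⁻ ρ in Ioo (-1) 1, ∫⁻ t in {t | x₁ ^ 2 + x₂ ^ 2 - 2 * ρ * x₁ * x₂ < t ^ 2 * (1 - ρ ^ 2)},
          ENNReal.ofReal (√(1 - ρ ^ 2))⁻¹ * ENNReal.ofReal (t * exp (-t ^ 2 / 2))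
            ∂volume.restrict (Ioi 0) := by
      refine setLIntegral_congr_fun measurableSet_Ioo fun ρ ⟨hρ₁, hρ₂⟩ => ?_
      have hρ : 0 < 1 - ρ ^ 2 := by nlinarith
      rw [Measure.restrict_restrict (hslice₁ ρ), lintegral_const_mul' _ _ ENNReal.ofReal_ne_top,
        ← ofReal_exp_neg_div_eq_setLIntegral
          (by nlinarith [sq_nonneg (x₁ - ρ * x₂), mul_nonneg (sq_nonneg x₂) hρ.le]) hρ]
    _ = ∫⁻ t in Ioi 0, ∫⁻ ρ in {ρ | x₁ ^ 2 + x₂ ^ 2 - 2 * ρ * x₁ * x₂ < t ^ 2 * (1 - ρ ^ 2)},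
          ENNReal.ofReal (√(1 - ρ ^ 2))⁻¹ * ENNReal.ofReal (t * exp (-t ^ 2 / 2))
            ∂volume.restrict (Ioo (-1) 1) :=
      lintegral_setLIntegral_swap
        (s := {p : ℝ × ℝ | x₁ ^ 2 + x₂ ^ 2 - 2 * p.1 * x₁ * x₂ < p.2 ^ 2 * (1 - p.1 ^ 2)})
        (f := fun ρ t => ENNReal.ofReal (√(1 - ρ ^ 2))⁻¹ * ENNReal.ofReal (t * exp (-t ^ 2 / 2)))
        (measurableSet_lt (by fun_prop) (by fun_prop)) (by fun_prop)
    _ = _ := by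
      refine setLIntegral_congr_fun measurableSet_Ioi fun t ht => ?_
      rw [Measure.restrict_restrict (hslice₂ t), lintegral_mul_const' _ _ ENNReal.ofReal_ne_top,
        setLIntegral_levelSet_inv_sqrt_one_sub_sq hx₁ hx₂ ht]

lemma setLIntegral_arccos_mul_exp {a : ℝ} (ha : 0 ≤ a) :
    ∫⁻ t in Ioi 0, ENNReal.ofReal (2 * arccos (a / t)) * ENNReal.ofReal (t * exp (-t ^ 2 / 2)) =
      ∫⁻ v in Ioi a, ENNReal.ofReal (√(2 * π) * exp (-v ^ 2 / 2)) := by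
  calc
    _ = ∫⁻ t in Ioi 0, ∫⁻ v in Iio t,
          ENNReal.ofReal (√(t ^ 2 - v ^ 2))⁻¹ * ENNReal.ofReal (2 * (t * exp (-t ^ 2 / 2)))
            ∂volume.restrict (Ioi a) := by
      refine setLIntegral_congr_fun measurableSet_Ioi fun t (ht : 0 < t) => ?_
      rw [Measure.restrict_restrict measurableSet_Iio, Iio_inter_Ioi,
        lintegral_mul_const' _ _ ENNReal.ofReal_ne_top,
        setLIntegral_Ioo_inv_sqrt_sq_sub_sq_eq_arccos ht (by linarith),
        ← ENNReal.ofReal_mul (mul_nonneg zero_le_two (arccos_nonneg _)),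
        ← ENNReal.ofReal_mul (arccos_nonneg _)]
      ring_nf
    _ = ∫⁻ v in Ioi a, ∫⁻ t in Ioi v,
          ENNReal.ofReal (√(t ^ 2 - v ^ 2))⁻¹ * ENNReal.ofReal (2 * (t * exp (-t ^ 2 / 2)))
            ∂volume.restrict (Ioi 0) :=
      lintegral_setLIntegral_swap (s := {p : ℝ × ℝ | p.2 < p.1})
        (f := fun t v =>
          ENNReal.ofReal (√(t ^ 2 - v ^ 2))⁻¹ * ENNReal.ofReal (2 * (t * exp (-t ^ 2 / 2))))
        (measurableSet_lt (by fun_prop) (by fun_prop)) (by fun_prop)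
    _ = _ := by
      refine setLIntegral_congr_fun measurableSet_Ioi fun v (hv : a < v) => ?_
      rw [Measure.restrict_restrict measurableSet_Ioi, Ioi_inter_Ioi, max_eq_left (ha.trans hv.le),
        setLIntegral_Ioi_inv_sqrt_sq_sub_sq_mul_exp (ha.trans hv.le)]

lemma integral_bivariateNormalDensity_of_nonneg {x₁ x₂ : ℝ} (hx₁ : 0 ≤ x₁) (hx₂ : 0 ≤ x₂) :
    ∫ ρ in Ioo (-1) 1, bivariateNormalDensity ρ x₁ x₂ = 1 - stdNormalCDF (max x₁ x₂) := by
  have hdensity : ∀ ρ, bivariateNormalDensity ρ x₁ x₂ = (2 * π)⁻¹ * ((√(1 - ρ ^ 2))⁻¹ *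
      exp (-(x₁ ^ 2 + x₂ ^ 2 - 2 * ρ * x₁ * x₂) / (2 * (1 - ρ ^ 2)))) := fun ρ => by
    rw [bivariateNormalDensity, mul_inv, mul_assoc]
  have htail : 0 ≤ ∫ v in Ioi (max x₁ x₂), exp (-v ^ 2 / 2) :=
    setIntegral_nonneg measurableSet_Ioi fun v _ => (exp_pos _).le
  simp_rw [hdensity]
  rw [integral_const_mul, integral_eq_lintegral_of_nonneg_ae
      (Eventually.of_forall fun ρ => by positivity) (by fun_prop)]
  simp_rw [ENNReal.ofReal_mul (inv_nonneg.2 (sqrt_nonneg _))]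
  rw [setLIntegral_inv_sqrt_mul_exp_eq_arccos hx₁ hx₂,
    setLIntegral_arccos_mul_exp (le_max_of_le_left hx₁),
    ← ofReal_integral_eq_lintegral_ofReal
      ((integrable_exp_neg_sq_div_two.const_mul _).integrableOn)
      (Eventually.of_forall fun v => by positivity),
    integral_const_mul, ENNReal.toReal_ofReal (mul_nonneg (sqrt_nonneg _) htail),
    one_sub_stdNormalCDF, ← mul_assoc]
  congr 1
  have hsq : √(2 * π) ^ 2 = 2 * π := sq_sqrt (by positivity)
  have hpos : 0 < √(2 * π) := by positivity
  field_simp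
  linear_combination hsq

lemma integral_Ioo_comp_neg {E : Type*} [NormedAddCommGroup E] [NormedSpace ℝ E] (f : ℝ → E)
    (a : ℝ) : ∫ x in Ioo (-a) a, f (-x) = ∫ x in Ioo (-a) a, f x := by
  have hneg : MeasurableEmbedding fun x : ℝ => -x :=
    (Homeomorph.neg ℝ).isClosedEmbedding.measurableEmbedding
  have := hneg.setIntegral_map (μ := volume) f (Ioo (-a) a)
  rw [Measure.map_neg_eq_self] at this
  rw [this, neg_preimage, neg_Ioo, neg_neg]

lemma integral_bivariateNormalDensity_abs (x₁ x₂ : ℝ) :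
    ∫ ρ in Ioo (-1) 1, bivariateNormalDensity ρ |x₁| |x₂| =
      ∫ ρ in Ioo (-1) 1, bivariateNormalDensity ρ x₁ x₂ := by
  rcases le_total 0 (x₁ * x₂) with h | h
  · have habs : |x₁| * |x₂| = x₁ * x₂ := by rw [← abs_mul, abs_of_nonneg h]
    congr 1 with ρ
    simp only [bivariateNormalDensity, sq_abs, mul_assoc, habs]
  · have habs : |x₁| * |x₂| = -(x₁ * x₂) := by rw [← abs_mul, abs_of_nonpos h]
    rw [← integral_Ioo_comp_neg]
    congr 1 with ρ
    simp only [bivariateNormalDensity, sq_abs, neg_sq, mul_assoc, habs]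
    ring_nf

lemma integral_bivariateNormalDensity (x₁ x₂ : ℝ) :
    ∫ ρ in Ioo (-1) 1, bivariateNormalDensity ρ x₁ x₂ = 1 - stdNormalCDF (max |x₁| |x₂|) := by
  rw [← integral_bivariateNormalDensity_abs,
    integral_bivariateNormalDensity_of_nonneg (abs_nonneg _) (abs_nonneg _)]

theorem uniform_correlation_mixture (x₁ x₂ : ℝ) :
    (∫ ρ in Set.Ioo (-1 : ℝ) 1,
      (1 / 2) * ((2 * Real.pi * Real.sqrt (1 - ρ ^ 2))⁻¹ *
        Real.exp (-(x₁ ^ 2 + x₂ ^ 2 - 2 * ρ * x₁ * x₂) / (2 * (1 - ρ ^ 2))))) =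
    (1 / 2) * (1 - stdNormalCDF (max |x₁| |x₂|)) := by
  rw [integral_const_mul]
  exact congrArg _ (integral_bivariateNormalDensity x₁ x₂)
end

section
/- The function f(x₁,x₂) = (1/2)·(1-Φ(max(|x₁|,|x₂|))) is a probability density on ℝ², i.e., it is nonnegative and integrates to 1. -/
/-!
Write `1 - Φ t = P(Z > t)` for a standard Gaussian `Z`. By Tonelli,
`∫ P(Z > max |x₁| |x₂|) dx = E[vol {x | max |x₁| |x₂| < Z}] = E[4 (Z⁺)²]`,
and since `Z` and `-Z` have the same law this is `2 E[Z²] = 2`.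
-/

open Real MeasureTheory

open Set ProbabilityTheory
open scoped ENNReal NNReal

theorem stdNormalCDF_eq_gaussianReal (t : ℝ) :
    stdNormalCDF t = (gaussianReal 0 1).real (Iic t) := by
  rw [measureReal_def, gaussianReal_apply_eq_integral _ one_ne_zero,
    ENNReal.toReal_ofReal
      (setIntegral_nonneg measurableSet_Iic fun s _ ↦ gaussianPDFReal_nonneg _ _ _)]
  simp [stdNormalCDF, gaussianPDFReal]

theorem one_sub_stdNormalCDF_s1 (t : ℝ) :
    1 - stdNormalCDF t = (gaussianReal 0 1).real (Ioi t) := by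
  rw [stdNormalCDF_eq_gaussianReal, ← compl_Iic, probReal_compl_eq_one_sub measurableSet_Iic]

theorem lintegral_measure_Ioi_comp_eq_lintegral_measure_lt {α : Type*} [MeasurableSpace α]
    (μ : Measure α) [SFinite μ] (ν : Measure ℝ) [SFinite ν] {m : α → ℝ} (hm : Measurable m) :
    ∫⁻ x, ν (Ioi (m x)) ∂μ = ∫⁻ s, μ {x | m x < s} ∂ν := by
  have hS : MeasurableSet {p : α × ℝ | m p.1 < p.2} :=
    measurableSet_lt (hm.comp measurable_fst) measurable_snd
  exact (Measure.prod_apply hS).symm.trans (Measure.prod_apply_symm hS)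

theorem volume_max_abs_lt (s : ℝ) :
    volume {x : ℝ × ℝ | max |x.1| |x.2| < s} = 4 * ENNReal.ofReal s ^ 2 := by
  have : {x : ℝ × ℝ | max |x.1| |x.2| < s} = Ioo (-s) s ×ˢ Ioo (-s) s := by
    ext x; simp only [mem_ofPred_eq, max_lt_iff, abs_lt, mem_prod, mem_Ioo]
  rw [this, Measure.volume_eq_prod, Measure.prod_prod, Real.volume_Ioo, sub_neg_eq_add,
    ← two_mul, ENNReal.ofReal_mul zero_le_two]
  norm_num
  ring

theorem two_mul_lintegral_ofReal_sq_of_map_neg {ν : Measure ℝ} (hν : ν.map (fun s ↦ -s) = ν) :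
    2 * ∫⁻ s, ENNReal.ofReal s ^ 2 ∂ν = ∫⁻ s, ‖s‖ₑ ^ 2 ∂ν := by
  conv_lhs => rw [two_mul]; enter [2]; rw [← hν]
  rw [lintegral_map (by fun_prop) (by fun_prop), ← lintegral_add_left (by fun_prop)]
  congr with s
  rw [Real.enorm_eq_ofReal_abs]
  rcases le_total 0 s with hs | hs
  · rw [abs_of_nonneg hs, ENNReal.ofReal_of_nonpos (neg_nonpos.2 hs)]; simp
  · rw [abs_of_nonpos hs, ENNReal.ofReal_of_nonpos hs]; simp

theorem lintegral_enorm_sq_gaussianReal (v : ℝ≥0) :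
    ∫⁻ s, ‖s‖ₑ ^ 2 ∂gaussianReal 0 v = v := by
  have h := ofReal_variance (memLp_id_gaussianReal (μ := 0) (v := v) 2)
  rw [variance_id_gaussianReal, ENNReal.ofReal_coe_nnreal] at h
  simp [h, evariance, integral_id_gaussianReal]

theorem lintegral_gaussianReal_Ioi_max_abs :
    ∫⁻ x : ℝ × ℝ, gaussianReal 0 1 (Ioi (max |x.1| |x.2|)) = 2 := by
  rw [lintegral_measure_Ioi_comp_eq_lintegral_measure_lt _ _ (by fun_prop)]
  simp_rw [volume_max_abs_lt]
  rw [lintegral_const_mul _ (by fun_prop), show (4 : ℝ≥0∞) = 2 * 2 by norm_num, mul_assoc,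
    two_mul_lintegral_ofReal_sq_of_map_neg (by simpa using gaussianReal_map_neg (μ := 0) (v := 1)),
    lintegral_enorm_sq_gaussianReal]
  simp

theorem square_contour_is_density :
    (∀ x : ℝ × ℝ, 0 ≤ (1 / 2) * (1 - stdNormalCDF (max |x.1| |x.2|))) ∧
    (∫ x : ℝ × ℝ, (1 / 2) * (1 - stdNormalCDF (max |x.1| |x.2|))) = 1 := by
  simp_rw [one_sub_stdNormalCDF_s1]
  refine ⟨fun x ↦ by positivity, ?_⟩
  have hanti : Antitone fun t : ℝ ↦ (gaussianReal 0 1).real (Ioi t) :=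
    fun _ _ hst ↦ measureReal_mono (Ioi_subset_Ioi hst)
  have hmeas : Measurable fun x : ℝ × ℝ ↦ (gaussianReal 0 1).real (Ioi (max |x.1| |x.2|)) :=
    hanti.measurable.comp (by fun_prop)
  rw [integral_eq_lintegral_of_nonneg_ae (ae_of_all _ fun x ↦ by positivity)
    (hmeas.const_mul _).aestronglyMeasurable]
  simp_rw [ENNReal.ofReal_mul one_half_pos.le]
  simp only [ofReal_measureReal, ne_eq, measure_ne_top, not_false_eq_true]
  rw [lintegral_const_mul' _ _ ENNReal.ofReal_ne_top, lintegral_gaussianReal_Ioi_max_abs]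
  norm_num
end

section
/- The bivariate density f(x₁,x₂) = (1/2)·(1-Φ(max(|x₁|,|x₂|))) has standard normal marginals: for every x₁ ∈ ℝ, ∫_ℝ f(x₁,x₂) dx₂ = (2π)^{-1/2} e^{-x₁²/2}. -/
/-!
Write `a = |x₁|`. The integrand is even in `x₂` and equals the constant `(1 - Φ a) / 2` on
`|x₂| ≤ a`, so the integral is `a (1 - Φ a) + ∫_a^∞ (1 - Φ t) dt`. Since
`t (1 - Φ t) - φ t` is an antiderivative of `1 - Φ t` that vanishes at infinity (Mills'
inequality `t (1 - Φ t) ≤ φ t`), the tail integral is `φ a - a (1 - Φ a)`, and the two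
`a (1 - Φ a)` terms cancel.
-/

open Real MeasureTheory Set Filter Topology

theorem integral_Ioi_zero_comp_max {E : Type*} [NormedAddCommGroup E] [NormedSpace ℝ E]
    [CompleteSpace E] {g : ℝ → E} {a : ℝ} (ha : 0 ≤ a) (hg : IntegrableOn g (Ioi a)) :
    ∫ y in Ioi 0, g (max a y) = a • g a + ∫ y in Ioi a, g y := by
  have h_const : EqOn (fun y => g (max a y)) (fun _ => g a) (Ioc 0 a) :=
    fun y hy => by simp only [max_eq_left hy.2]
  have h_tail : EqOn (fun y => g (max a y)) g (Ioi a) :=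
    fun y hy => by simp only [max_eq_right hy.out.le]
  rw [← Ioc_union_Ioi_eq_Ioi ha, setIntegral_union (Ioc_disjoint_Ioi le_rfl) measurableSet_Ioi
      ((integrableOn_const measure_Ioc_lt_top.ne).congr_fun h_const.symm measurableSet_Ioc)
      (hg.congr_fun h_tail.symm measurableSet_Ioi),
    setIntegral_congr_fun measurableSet_Ioc h_const, setIntegral_congr_fun measurableSet_Ioi h_tail,
    setIntegral_const, measureReal_def, Real.volume_Ioc, sub_zero, ENNReal.toReal_ofReal ha]

noncomputable def stdNormalPDF (s : ℝ) : ℝ := (√(2 * π))⁻¹ * rexp (-s ^ 2 / 2)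

namespace stdNormalPDF

theorem nonneg (s : ℝ) : 0 ≤ stdNormalPDF s := by
  unfold stdNormalPDF; positivity

theorem continuous : Continuous stdNormalPDF := by
  unfold stdNormalPDF; fun_prop

theorem eq_mul_exp_neg_mul_sq :
    stdNormalPDF = fun s => (√(2 * π))⁻¹ * rexp (-(1 / 2) * s ^ 2) := by
  ext s; rw [stdNormalPDF]; ring_nf

theorem integrable : Integrable stdNormalPDF := by
  rw [eq_mul_exp_neg_mul_sq]
  exact (integrable_exp_neg_mul_sq (by norm_num)).const_mul _

theorem integral_eq_one : ∫ s, stdNormalPDF s = 1 := by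
  rw [eq_mul_exp_neg_mul_sq, integral_const_mul, integral_gaussian,
    show π / (1 / 2) = 2 * π by ring]
  exact inv_mul_cancel₀ (Real.sqrt_pos.mpr (by positivity)).ne'

theorem hasDerivAt (s : ℝ) : HasDerivAt stdNormalPDF (-(s * stdNormalPDF s)) s := by
  have h_exponent : HasDerivAt (fun u : ℝ => -u ^ 2 / 2) (-s) s :=
    ((hasDerivAt_pow 2 s).neg.div_const 2).congr_deriv (by ring)
  exact (h_exponent.exp.const_mul (√(2 * π))⁻¹).congr_deriv (by rw [stdNormalPDF]; ring)

theorem tendsto_atTop : Tendsto stdNormalPDF atTop (𝓝 0) := by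
  have h_exponent : Tendsto (fun s : ℝ => -s ^ 2 / 2) atTop atBot :=
    (tendsto_neg_atBot_iff.mpr (tendsto_pow_atTop two_ne_zero)).atBot_div_const two_pos
  exact mul_zero (√(2 * π))⁻¹ ▸
    (tendsto_exp_atBot.comp h_exponent).const_mul (√(2 * π))⁻¹

theorem integrableOn_and_integral_Ioi_mul_self {t : ℝ} (ht : 0 ≤ t) :
    IntegrableOn (fun s => s * stdNormalPDF s) (Ioi t) ∧
      ∫ s in Ioi t, s * stdNormalPDF s = stdNormalPDF t := by
  have h_deriv : ∀ s ∈ Ici t, HasDerivAt (fun u => -stdNormalPDF u) (s * stdNormalPDF s) s :=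
    fun s _ => (hasDerivAt s).fun_neg.congr_deriv (neg_neg _)
  have h_nonneg : ∀ s ∈ Ioi t, 0 ≤ s * stdNormalPDF s :=
    fun s hs => mul_nonneg (ht.trans hs.out.le) (nonneg s)
  have h_lim : Tendsto (fun u => -stdNormalPDF u) atTop (𝓝 0) := by
    simpa using tendsto_atTop.neg
  refine ⟨integrableOn_Ioi_deriv_of_nonneg' h_deriv h_nonneg h_lim, ?_⟩
  simpa using integral_Ioi_of_hasDerivAt_of_nonneg' h_deriv h_nonneg h_lim

end stdNormalPDF

namespace stdNormalCDF

theorem eq_integral_stdNormalPDF (t : ℝ) : stdNormalCDF t = ∫ s in Iic t, stdNormalPDF s := rfl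

theorem one_sub_eq_integral_Ioi (t : ℝ) :
    1 - stdNormalCDF t = ∫ s in Ioi t, stdNormalPDF s := by
  rw [← stdNormalPDF.integral_eq_one, eq_integral_stdNormalPDF,
    ← intervalIntegral.integral_Iic_add_Ioi stdNormalPDF.integrable.integrableOn
        stdNormalPDF.integrable.integrableOn, add_sub_cancel_left]

theorem le_one (t : ℝ) : stdNormalCDF t ≤ 1 := by
  have := one_sub_eq_integral_Ioi t ▸
    setIntegral_nonneg measurableSet_Ioi fun s _ => stdNormalPDF.nonneg s
  linarith

theorem hasDerivAt (t : ℝ) : HasDerivAt stdNormalCDF (stdNormalPDF t) t := by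
  have h_shift :
      stdNormalCDF = fun u => stdNormalCDF 0 + ∫ s in (0 : ℝ)..u, stdNormalPDF s := by
    ext u
    rw [eq_integral_stdNormalPDF, eq_integral_stdNormalPDF,
      ← intervalIntegral.integral_Iic_sub_Iic stdNormalPDF.integrable.integrableOn
        stdNormalPDF.integrable.integrableOn, add_sub_cancel]
  rw [h_shift]
  exact (stdNormalPDF.continuous.integral_hasStrictDerivAt 0 t).hasDerivAt.const_add _

theorem mul_one_sub_le {t : ℝ} (ht : 0 ≤ t) : t * (1 - stdNormalCDF t) ≤ stdNormalPDF t := by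
  obtain ⟨h_int, h_eq⟩ := stdNormalPDF.integrableOn_and_integral_Ioi_mul_self ht
  rw [one_sub_eq_integral_Ioi, ← integral_const_mul, ← h_eq]
  exact setIntegral_mono_on (stdNormalPDF.integrable.integrableOn.const_mul t) h_int
    measurableSet_Ioi fun s hs => mul_le_mul_of_nonneg_right hs.out.le (stdNormalPDF.nonneg s)

theorem tendsto_mul_one_sub_atTop :
    Tendsto (fun t => t * (1 - stdNormalCDF t)) atTop (𝓝 0) := by
  refine squeeze_zero' ?_ ?_ stdNormalPDF.tendsto_atTop
  · filter_upwards [eventually_ge_atTop 0] with t ht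
    exact mul_nonneg ht (sub_nonneg.mpr (le_one t))
  · filter_upwards [eventually_ge_atTop 0] with t ht
    exact mul_one_sub_le ht

theorem integrableOn_and_integral_Ioi_one_sub (a : ℝ) :
    IntegrableOn (fun t => 1 - stdNormalCDF t) (Ioi a) ∧
      ∫ t in Ioi a, (1 - stdNormalCDF t) = stdNormalPDF a - a * (1 - stdNormalCDF a) := by
  have h_deriv : ∀ t ∈ Ici a, HasDerivAt (fun u => u * (1 - stdNormalCDF u) - stdNormalPDF u)
      (1 - stdNormalCDF t) t := fun t _ =>
    (((hasDerivAt_id t).fun_mul ((hasDerivAt_const t 1).fun_sub (hasDerivAt t))).fun_sub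
      (stdNormalPDF.hasDerivAt t)).congr_deriv (by simp only [id]; ring)
  have h_nonneg : ∀ t ∈ Ioi a, 0 ≤ 1 - stdNormalCDF t := fun t _ => sub_nonneg.mpr (le_one t)
  have h_lim : Tendsto (fun u => u * (1 - stdNormalCDF u) - stdNormalPDF u) atTop (𝓝 0) := by
    simpa using tendsto_mul_one_sub_atTop.sub stdNormalPDF.tendsto_atTop
  refine ⟨integrableOn_Ioi_deriv_of_nonneg' h_deriv h_nonneg h_lim, ?_⟩
  rw [integral_Ioi_of_hasDerivAt_of_nonneg' h_deriv h_nonneg h_lim]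
  ring

end stdNormalCDF

theorem square_contour_normal_marginals (x₁ : ℝ) :
    (∫ x₂ : ℝ, (1 / 2) * (1 - stdNormalCDF (max |x₁| |x₂|))) =
      (Real.sqrt (2 * Real.pi))⁻¹ * Real.exp (-x₁ ^ 2 / 2) := by
  obtain ⟨h_int, h_tail⟩ := stdNormalCDF.integrableOn_and_integral_Ioi_one_sub |x₁|
  have h_pdf : stdNormalPDF |x₁| = (√(2 * π))⁻¹ * rexp (-x₁ ^ 2 / 2) := by
    rw [stdNormalPDF, sq_abs]
  rw [integral_const_mul, integral_comp_abs (f := fun y => 1 - stdNormalCDF (max |x₁| y)),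
    integral_Ioi_zero_comp_max (abs_nonneg x₁) h_int, h_tail, ← h_pdf, smul_eq_mul]
  ring
end

section
/- For fixed reals x₁, x₂, the function g(ρ) = (x₁²+x₂²-2ρx₁x₂)/(2(1-ρ²)) on (-1,1) is convex: its second derivative equals ((1+3ρ²)x₁² - 2ρ(ρ²+3)x₁x₂ + (1+3ρ²)x₂²)/(1-ρ²)³, which is nonnegative for all ρ ∈ (-1,1). -/
/-!
The numerator of the second derivative is a nonnegative combination of squares,
`2 · numerator = (1 - ρ)³ (x₁ + x₂)² + (1 + ρ)³ (x₁ - x₂)²`,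
and its denominator `(1 - ρ²)³` is positive on `(-1, 1)`.
-/

open Set

noncomputable section

namespace BivariateNormalExponent

variable (x₁ x₂ : ℝ)

def exponent (ρ : ℝ) : ℝ :=
  (x₁ ^ 2 + x₂ ^ 2 - 2 * ρ * x₁ * x₂) / (2 * (1 - ρ ^ 2))

def exponentDeriv (ρ : ℝ) : ℝ :=
  ((x₁ ^ 2 + x₂ ^ 2) * ρ - x₁ * x₂ * (1 + ρ ^ 2)) / (1 - ρ ^ 2) ^ 2

def exponentDeriv2Numerator (ρ : ℝ) : ℝ :=
  (1 + 3 * ρ ^ 2) * x₁ ^ 2 - 2 * ρ * (ρ ^ 2 + 3) * x₁ * x₂ + (1 + 3 * ρ ^ 2) * x₂ ^ 2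

def exponentDeriv2 (ρ : ℝ) : ℝ :=
  exponentDeriv2Numerator x₁ x₂ ρ / (1 - ρ ^ 2) ^ 3

variable {x₁ x₂} {ρ : ℝ}

theorem hasDerivAt_exponent (hρ : ρ ^ 2 ≠ 1) :
    HasDerivAt (exponent x₁ x₂) (exponentDeriv x₁ x₂ ρ) ρ := by
  have hden : 1 - ρ ^ 2 ≠ 0 := sub_ne_zero.mpr (Ne.symm hρ)
  have h := (((hasDerivAt_id' ρ).const_mul 2 |>.mul_const x₁ |>.mul_const x₂).const_sub
    (x₁ ^ 2 + x₂ ^ 2)).fun_div (((hasDerivAt_pow 2 ρ).const_sub 1).const_mul 2)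
    (mul_ne_zero two_ne_zero hden)
  refine h.congr_deriv ?_
  simp only [exponentDeriv]
  field_simp
  ring

theorem hasDerivAt_exponentDeriv (hρ : ρ ^ 2 ≠ 1) :
    HasDerivAt (exponentDeriv x₁ x₂) (exponentDeriv2 x₁ x₂ ρ) ρ := by
  have hden : 1 - ρ ^ 2 ≠ 0 := sub_ne_zero.mpr (Ne.symm hρ)
  have h := (((hasDerivAt_id' ρ).const_mul (x₁ ^ 2 + x₂ ^ 2)).fun_sub
    (((hasDerivAt_pow 2 ρ).const_add 1).const_mul (x₁ * x₂))).fun_div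
    (((hasDerivAt_pow 2 ρ).const_sub 1).fun_pow 2) (pow_ne_zero 2 hden)
  refine h.congr_deriv ?_
  simp only [exponentDeriv2, exponentDeriv2Numerator]
  field_simp
  ring

theorem deriv_deriv_exponent (hρ : ρ ^ 2 ≠ 1) :
    deriv (deriv (exponent x₁ x₂)) ρ = exponentDeriv2 x₁ x₂ ρ := by
  have hnear : deriv (exponent x₁ x₂) =ᶠ[nhds ρ] exponentDeriv x₁ x₂ :=
    ((continuous_pow 2).continuousAt.eventually_ne hρ).mono
      fun _ h ↦ (hasDerivAt_exponent h).deriv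
  rw [hnear.deriv_eq, (hasDerivAt_exponentDeriv hρ).deriv]

theorem two_mul_exponentDeriv2Numerator :
    2 * exponentDeriv2Numerator x₁ x₂ ρ =
      (1 - ρ) ^ 3 * (x₁ + x₂) ^ 2 + (1 + ρ) ^ 3 * (x₁ - x₂) ^ 2 := by
  simp only [exponentDeriv2Numerator]
  ring

theorem exponentDeriv2Numerator_nonneg (hρ : ρ ∈ Icc (-1 : ℝ) 1) :
    0 ≤ exponentDeriv2Numerator x₁ x₂ ρ := by
  have h₁ : 0 ≤ 1 - ρ := by linarith [hρ.2]
  have h₂ : 0 ≤ 1 + ρ := by linarith [hρ.1]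
  have h : 0 ≤ 2 * exponentDeriv2Numerator x₁ x₂ ρ := by
    rw [two_mul_exponentDeriv2Numerator]
    positivity
  linarith

theorem exponentDeriv2_nonneg (hρ : ρ ∈ Icc (-1 : ℝ) 1) : 0 ≤ exponentDeriv2 x₁ x₂ ρ := by
  have hden : 0 ≤ 1 - ρ ^ 2 := by nlinarith [hρ.1, hρ.2]
  exact div_nonneg (exponentDeriv2Numerator_nonneg hρ) (pow_nonneg hden 3)

theorem sq_ne_one_of_mem_Ioo (hρ : ρ ∈ Ioo (-1 : ℝ) 1) : ρ ^ 2 ≠ 1 := by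
  obtain ⟨hlt, hgt⟩ := hρ
  nlinarith

theorem convexOn_exponent : ConvexOn ℝ (Ioo (-1) 1) (exponent x₁ x₂) := by
  have hd : ∀ ρ ∈ Ioo (-1 : ℝ) 1, HasDerivAt (exponent x₁ x₂) (exponentDeriv x₁ x₂ ρ) ρ :=
    fun ρ hρ ↦ hasDerivAt_exponent (sq_ne_one_of_mem_Ioo hρ)
  refine convexOn_of_hasDerivWithinAt2_nonneg (f' := exponentDeriv x₁ x₂)
    (f'' := exponentDeriv2 x₁ x₂) (convex_Ioo _ _)
    (fun ρ hρ ↦ (hd ρ hρ).continuousAt.continuousWithinAt) ?_ ?_ ?_ <;> rw [interior_Ioo]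
  · exact fun ρ hρ ↦ (hd ρ hρ).hasDerivWithinAt
  · exact fun ρ hρ ↦ (hasDerivAt_exponentDeriv (sq_ne_one_of_mem_Ioo hρ)).hasDerivWithinAt
  · exact fun ρ hρ ↦ exponentDeriv2_nonneg (Ioo_subset_Icc_self hρ)

end BivariateNormalExponent

end

open BivariateNormalExponent in
theorem exponent_convex (x₁ x₂ : ℝ) :
    ConvexOn ℝ (Set.Ioo (-1 : ℝ) 1)
      (fun ρ : ℝ => (x₁ ^ 2 + x₂ ^ 2 - 2 * ρ * x₁ * x₂) / (2 * (1 - ρ ^ 2))) ∧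
    ∀ ρ ∈ Set.Ioo (-1 : ℝ) 1,
      deriv (deriv (fun ρ : ℝ => (x₁ ^ 2 + x₂ ^ 2 - 2 * ρ * x₁ * x₂) / (2 * (1 - ρ ^ 2)))) ρ =
        ((1 + 3 * ρ ^ 2) * x₁ ^ 2 - 2 * ρ * (ρ ^ 2 + 3) * x₁ * x₂ + (1 + 3 * ρ ^ 2) * x₂ ^ 2) /
          (1 - ρ ^ 2) ^ 3 ∧
      0 ≤ ((1 + 3 * ρ ^ 2) * x₁ ^ 2 - 2 * ρ * (ρ ^ 2 + 3) * x₁ * x₂ + (1 + 3 * ρ ^ 2) * x₂ ^ 2) /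
          (1 - ρ ^ 2) ^ 3 :=
  ⟨convexOn_exponent, fun _ hρ ↦
    ⟨deriv_deriv_exponent (sq_ne_one_of_mem_Ioo hρ), exponentDeriv2_nonneg (Ioo_subset_Icc_self hρ)⟩⟩
end

section
/- Let x₁ > x₂ ≥ 0 and define ρ(y) = (x₁x₂ + √((2y-x₁²)(2y-x₂²)))/(2y) for y ≥ x₁²/2. Then for each y ≥ x₁²/2, g(ρ(y)) = y, where g(ρ) = (x₁²+x₂²-2ρx₁x₂)/(2(1-ρ²)); i.e., ρ(y) inverts g on [a,1) with a = x₂/x₁. -/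
theorem rho_inverts_g (x₁ x₂ : ℝ) (h12 : x₁ > x₂) (h2 : x₂ ≥ 0) (y : ℝ)
    (hy : x₁ ^ 2 / 2 ≤ y) :
    (fun ρ : ℝ => (x₁ ^ 2 + x₂ ^ 2 - 2 * ρ * x₁ * x₂) / (2 * (1 - ρ ^ 2)))
        ((x₁ * x₂ + Real.sqrt ((2 * y - x₁ ^ 2) * (2 * y - x₂ ^ 2))) / (2 * y)) = y := by
  have hx1 : 0 < x₁ := lt_of_le_of_lt h2 h12
  have hy0 : 0 < y := by nlinarith
  set s := Real.sqrt ((2 * y - x₁ ^ 2) * (2 * y - x₂ ^ 2)) with hs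
  have hsnn : 0 ≤ s := Real.sqrt_nonneg _
  have hs2 : s ^ 2 = (2 * y - x₁ ^ 2) * (2 * y - x₂ ^ 2) := by
    rw [hs, Real.sq_sqrt]
    apply mul_nonneg <;> nlinarith
  have hprod : (0:ℝ) < x₁ ^ 2 - x₁ * x₂ := by nlinarith
  have hlt : x₁ * x₂ + s < 2 * y := by
    nlinarith [hs2, hsnn, sq_nonneg (x₁ - x₂), mul_pos hy0 (mul_pos (sub_pos.mpr h12) (sub_pos.mpr h12))]
  have hnn : 0 ≤ x₁ * x₂ + s := by positivity
  set ρ := (x₁ * x₂ + s) / (2 * y) with hρ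
  have hρ1 : ρ < 1 := by
    rw [hρ, div_lt_one (by linarith)]; exact hlt
  have hρ0 : 0 ≤ ρ := by positivity
  have hden : (0:ℝ) < 2 * (1 - ρ ^ 2) := by nlinarith
  simp only
  rw [div_eq_iff (ne_of_gt hden), hρ]
  field_simp
  ring_nf
  nlinarith [hs2]
end

section
/- Suppose g: ℝ² → ℝ₊ is a probability density of the form g(x₁,x₂) = h(max(|x₁|,|x₂|)) for some differentiable h: ℝ₊ → ℝ₊ with h(y) → 0 as y → ∞, and g has standard normal marginals. Then g(x₁,x₂) = (1/2)·(1-Φ(max(|x₁|,|x₂|))). -/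
open MeasureTheory Filter

/-!
For `a ≥ 0` the marginal at `x₁ = a` splits into the square's side, where `h` is constant, and its
two tails: `2 a h(a) + 2 ∫_a^∞ h = φ(a)`. Differentiating, the two `h(a)` terms cancel and leave
`a h'(a) = -a φ(a) / 2`, so `h' = -φ / 2` on `(0, ∞)`; since `h → 0` at infinity,
`h(a) = ½ ∫_a^∞ φ = ½ (1 - Φ(a))`.
-/

open Set ProbabilityTheory Topology

lemma gaussianPDFReal_zero_one (x : ℝ) :
    gaussianPDFReal 0 1 x = (Real.sqrt (2 * Real.pi))⁻¹ * Real.exp (-x ^ 2 / 2) := by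
  simp [gaussianPDFReal]

lemma hasDerivAt_gaussianPDFReal (μ : ℝ) (v : NNReal) (x : ℝ) :
    HasDerivAt (gaussianPDFReal μ v) (-((x - μ) / v) * gaussianPDFReal μ v x) x := by
  have hsq : HasDerivAt (fun y => (y - μ) ^ 2) (2 * (x - μ)) x := by
    simpa using ((hasDerivAt_id x).sub_const μ).fun_pow 2
  have hexp : HasDerivAt (fun y => -(y - μ) ^ 2 / (2 * v)) (-((x - μ) / v)) x := by
    refine hsq.neg.div_const (2 * (v : ℝ)) |>.congr_deriv ?_
    by_cases hv : (v : ℝ) = 0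
    · simp [hv]
    · field_simp
  refine (hexp.exp.const_mul (Real.sqrt (2 * Real.pi * v))⁻¹).congr_deriv ?_
  simp only [gaussianPDFReal]; ring

lemma one_sub_stdNormalCDF_s18 (a : ℝ) :
    1 - stdNormalCDF a = ∫ x in Ioi a, gaussianPDFReal 0 1 x := by
  have hint := integrable_gaussianPDFReal 0 1
  rw [← integral_gaussianPDFReal_eq_one 0 one_ne_zero,
    ← intervalIntegral.integral_Iic_add_Ioi (b := a) hint.integrableOn hint.integrableOn]
  simp [stdNormalCDF, gaussianPDFReal_zero_one]

lemma integrableOn_Ioi_of_integrable_comp_max_abs {f : ℝ → ℝ} {a : ℝ} (ha : 0 ≤ a)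
    (hf : Integrable fun t => f (max a |t|)) : IntegrableOn f (Ioi a) :=
  hf.integrableOn.congr_fun (fun t (ht : a < t) => by
    simp [abs_of_pos (ha.trans_lt ht), ht.le]) measurableSet_Ioi

lemma integral_comp_max_abs {f : ℝ → ℝ} {a : ℝ} (ha : 0 ≤ a) (hf : IntegrableOn f (Ioi a)) :
    ∫ t, f (max a |t|) = 2 * (a * f a + ∫ t in Ioi a, f t) := by
  have hconst : EqOn (fun t => f (max a t)) (fun _ => f a) (uIcc 0 a) := fun t ht => by
    simp [max_eq_left (uIcc_of_le ha ▸ ht).2]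
  have htail : EqOn (fun t => f (max a t)) f (Ioi a) := fun t (ht : a < t) => by
    simp [ht.le]
  rw [integral_comp_abs (f := fun t => f (max a t)),
    ← intervalIntegral.integral_interval_add_Ioi' (b := a), intervalIntegral.integral_congr hconst,
    setIntegral_congr_fun measurableSet_Ioi htail]
  · simp
  · exact intervalIntegrable_const.congr_uIoo (hconst.symm.mono uIoo_subset_uIcc_self)
  · exact hf.congr_fun htail.symm measurableSet_Ioi

lemma hasDerivAt_integral_Ioi {f : ℝ → ℝ} {a b : ℝ} (hba : b < a) (hf : IntegrableOn f (Ioi b))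
    (hfm : StronglyMeasurableAtFilter f (𝓝 a)) (hfa : ContinuousAt f a) :
    HasDerivAt (fun x => ∫ t in Ioi x, f t) (-f a) a := by
  have hsplit : (fun x => ∫ t in Ioi x, f t) =ᶠ[𝓝 a]
      fun x => (∫ t in Ioi b, f t) - ∫ t in b..x, f t := by
    filter_upwards [Ioi_mem_nhds hba] with x hx
    rw [← intervalIntegral.integral_Ioi_sub_Ioi hf hx.le, sub_sub_cancel]
  have hprim : HasDerivAt (fun x => ∫ t in b..x, f t) (f a) a :=
    intervalIntegral.integral_hasDerivAt_right
      ((intervalIntegrable_iff_integrableOn_Ioc_of_le hba.le).2 (hf.mono_set Ioc_subset_Ioi_self))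
      hfm hfa
  simpa using (hprim.const_sub _).congr_of_eventuallyEq hsplit

lemma hasDerivAt_of_mul_add_integral_Ioi_eq {f g : ℝ → ℝ} {a b g' : ℝ} (ha : 0 < a) (hba : b < a)
    (hint : IntegrableOn f (Ioi b)) (hfm : StronglyMeasurableAtFilter f (𝓝 a))
    (hf : DifferentiableAt ℝ f a) (hg : HasDerivAt g g' a)
    (heq : (fun x => x * f x + ∫ t in Ioi x, f t) =ᶠ[𝓝 a] g) :
    HasDerivAt f (g' / a) a := by
  have hlhs := ((hasDerivAt_id a).mul hf.hasDerivAt).add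
    (hasDerivAt_integral_Ioi hba hint hfm hf.continuousAt)
  have hderiv : a * deriv f a = g' := by
    have := hlhs.unique (hg.congr_of_eventuallyEq heq)
    simp only [id, one_mul] at this
    linarith
  rw [← hderiv, mul_div_cancel_left₀ _ ha.ne']
  exact hf.hasDerivAt

theorem square_contour_uniqueness_general (h : ℝ → ℝ)
    (hdiff : DifferentiableOn ℝ h (Set.Ici 0))
    (hlim : Tendsto h atTop (nhds 0))
    (hmarg1 : ∀ x₁ : ℝ, (∫ x₂ : ℝ, h (max |x₁| |x₂|)) =
      (Real.sqrt (2 * Real.pi))⁻¹ * Real.exp (-x₁ ^ 2 / 2)) :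
    ∀ x₁ x₂ : ℝ, h (max |x₁| |x₂|) = (1 / 2) * (1 - stdNormalCDF (max |x₁| |x₂|)) := by
  have hslice (a : ℝ) (ha : 0 ≤ a) : ∫ t, h (max a |t|) = gaussianPDFReal 0 1 a := by
    simpa [abs_of_nonneg ha, gaussianPDFReal_zero_one] using hmarg1 a
  have hint (a : ℝ) (ha : 0 ≤ a) : IntegrableOn h (Ioi a) :=
    integrableOn_Ioi_of_integrable_comp_max_abs ha <| Integrable.of_integral_ne_zero <| by
      rw [hslice a ha]; exact (gaussianPDFReal_pos 0 1 a one_ne_zero).ne'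
  have heq (a : ℝ) (ha : 0 ≤ a) :
      a * h a + ∫ t in Ioi a, h t = gaussianPDFReal 0 1 a / 2 := by
    rw [← hslice a ha, integral_comp_max_abs ha (hint a ha)]; ring
  have hderiv (a : ℝ) (ha : 0 < a) : HasDerivAt h (-gaussianPDFReal 0 1 a / 2) a := by
    have := hasDerivAt_of_mul_add_integral_Ioi_eq ha ha (hint 0 le_rfl)
      ((hdiff.continuousOn.mono Ioi_subset_Ici_self).stronglyMeasurableAtFilter isOpen_Ioi a ha)
      (hdiff.differentiableAt (Ici_mem_nhds ha)) ((hasDerivAt_gaussianPDFReal 0 1 a).div_const 2)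
      (eventually_of_mem (Ioi_mem_nhds ha) fun x hx => heq x hx.le)
    convert this using 1
    simp [field]
  intro x₁ x₂
  have ha : 0 ≤ max |x₁| |x₂| := (abs_nonneg x₁).trans (le_max_left _ _)
  have hftc := integral_Ioi_of_hasDerivAt_of_tendsto
    ((hdiff.continuousOn.mono (Ici_subset_Ici.2 ha)) _ self_mem_Ici)
    (fun x hx => hderiv x (ha.trans_lt hx))
    ((integrable_gaussianPDFReal 0 1).integrableOn.neg.div_const 2) hlim
  rw [integral_div, integral_neg] at hftc
  rw [one_sub_stdNormalCDF_s18]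
  linarith

theorem square_contour_uniqueness (h : ℝ → ℝ)
    (hnn : ∀ y ≥ (0 : ℝ), 0 ≤ h y)
    (hdiff : DifferentiableOn ℝ h (Set.Ici 0))
    (hlim : Tendsto h atTop (nhds 0))
    (hdens : (∫ x : ℝ × ℝ, h (max |x.1| |x.2|)) = 1)
    (hmarg1 : ∀ x₁ : ℝ, (∫ x₂ : ℝ, h (max |x₁| |x₂|)) =
      (Real.sqrt (2 * Real.pi))⁻¹ * Real.exp (-x₁ ^ 2 / 2))
    (hmarg2 : ∀ x₂ : ℝ, (∫ x₁ : ℝ, h (max |x₁| |x₂|)) =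
      (Real.sqrt (2 * Real.pi))⁻¹ * Real.exp (-x₂ ^ 2 / 2)) :
    ∀ x₁ x₂ : ℝ, h (max |x₁| |x₂|) = (1 / 2) * (1 - stdNormalCDF (max |x₁| |x₂|)) :=
  square_contour_uniqueness_general h hdiff hlim hmarg1
end

section
/- If g(x) = h(‖x‖_∞) is a p-dimensional probability density (h: ℝ₊ → ℝ₊ differentiable, vanishing at infinity) whose one-dimensional marginals are all standard normal, then g(x) = (2^{p-1}√(2π))⁻¹ ∫_{‖x‖_∞}^∞ y^{2-p} e^{-y²/2} dy for all x ≠ 0. -/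
/-!
Let `φ` be the standard normal density. For `t > 0` the marginal density at `t` is
`∫ h (max t ‖z‖) dz` over `z ∈ ℝ^q`. Integrating over the sup-norm shells `‖z‖ = y`, of area
`q 2^q y^(q-1)`, turns the marginal condition into
`(2t)^q h(t) + q 2^q ∫_t^∞ y^(q-1) h(y) dy = φ(t)`. Differentiating in `t`, the two terms in
`h(t)` cancel, so `(2t)^q h'(t) = φ'(t) = -t φ(t)`; since `h` vanishes at infinity, integrating
`h'` from `‖x‖` to `∞` gives the formula.
-/

open MeasureTheory Filter Set

theorem Fin.norm_insertNth {E : Type*} [SeminormedAddCommGroup E] {q : ℕ} (i : Fin (q + 1))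
    (x : E) (z : Fin q → E) : ‖(i.insertNth x z : Fin (q + 1) → E)‖ = max ‖x‖ ‖z‖ := by
  refine le_antisymm ((pi_norm_le_iff_of_nonneg (by positivity)).2 fun j => ?_) (max_le ?_ ?_)
  · rcases i.eq_self_or_eq_succAbove j with rfl | ⟨k, rfl⟩
    · simp
    · simpa using le_max_of_le_right (norm_le_pi_norm z k)
  · simpa using norm_le_pi_norm (i.insertNth x z : Fin (q + 1) → E) i
  · refine (pi_norm_le_iff_of_nonneg (norm_nonneg _)).2 fun k => ?_
    simpa using norm_le_pi_norm (i.insertNth x z : Fin (q + 1) → E) (i.succAbove k)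

theorem integral_fun_norm_pi_fin_succ {F : Type*} [NormedAddCommGroup F] [NormedSpace ℝ F]
    (n : ℕ) (f : ℝ → F) :
    ∫ z : Fin (n + 1) → ℝ, f ‖z‖ =
      ((n + 1) * 2 ^ (n + 1) : ℝ) • ∫ y in Ioi (0 : ℝ), y ^ n • f y := by
  rw [integral_fun_norm_addHaar volume f, measureReal_def, Real.volume_pi_ball _ one_pos]
  simp [← Nat.cast_smul_eq_nsmul ℝ, smul_smul]

theorem hasDerivAt_integral_Ioi_s19 {E : Type*} [NormedAddCommGroup E]
    [NormedSpace ℝ E] [CompleteSpace E] {g : ℝ → E} {a t : ℝ} (hat : a < t)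
    (hg : IntegrableOn g (Ioi a)) (hcont : ContinuousOn g (Ioi a)) :
    HasDerivAt (fun s => ∫ y in Ioi s, g y) (-g t) t := by
  have hsplit : ∀ s ∈ Ioi a, ∫ y in Ioi s, g y = (∫ y in Ioi a, g y) - ∫ y in a..s, g y :=
    fun s hs => eq_sub_of_add_eq' (intervalIntegral.integral_interval_add_Ioi hg
      (hg.mono_set (Ioi_subset_Ioi (le_of_lt hs))))
  refine ((intervalIntegral.integral_hasDerivAt_right ?_ ?_ ?_).const_sub _).congr_of_eventuallyEq
    (eventually_of_mem (Ioi_mem_nhds hat) hsplit)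
  · exact (intervalIntegrable_iff_integrableOn_Ioc_of_le hat.le).2
      (hg.mono_set Ioc_subset_Ioi_self)
  · exact ⟨Ioi a, Ioi_mem_nhds hat, hcont.aestronglyMeasurable measurableSet_Ioi⟩
  · exact hcont.continuousAt (Ioi_mem_nhds hat)

theorem integral_Ioi_pow_mul_comp_max {f : ℝ → ℝ} (n : ℕ) {t : ℝ} (ht : 0 ≤ t)
    (hf : IntegrableOn (fun y => y ^ n * f (max t y)) (Ioi 0)) :
    ∫ y in Ioi 0, y ^ n * f (max t y) =
      t ^ (n + 1) / (n + 1) * f t + ∫ y in Ioi t, y ^ n * f y := by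
  rw [← intervalIntegral.integral_interval_add_Ioi hf (hf.mono_set (Ioi_subset_Ioi ht))]
  congr 1
  · rw [intervalIntegral.integral_congr (g := fun y => y ^ n * f t) fun y hy => ?_,
      intervalIntegral.integral_mul_const, integral_pow]
    · simp
    · rw [uIcc_of_le ht] at hy
      rw [max_eq_left hy.2]
  · exact setIntegral_congr_fun measurableSet_Ioi fun y hy => by rw [max_eq_right (le_of_lt hy)]

section SupNormShells

variable {f : ℝ → ℝ} {n : ℕ} {t : ℝ}

theorem integrableOn_pow_mul_comp_max_of_integrable_comp_max_norm
    (hf : Integrable fun z : Fin (n + 1) → ℝ => f (max t ‖z‖)) :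
    IntegrableOn (fun y => y ^ n * f (max t y)) (Ioi 0) := by
  simpa using (integrable_fun_norm_addHaar volume (f := fun y => f (max t y))).1 hf

theorem integrableOn_Ioi_pow_mul_of_integrable_comp_max_norm (ht : 0 ≤ t)
    (hf : Integrable fun z : Fin (n + 1) → ℝ => f (max t ‖z‖)) :
    IntegrableOn (fun y => y ^ n * f y) (Ioi t) :=
  ((integrableOn_pow_mul_comp_max_of_integrable_comp_max_norm hf).mono_set
    (Ioi_subset_Ioi ht)).congr_fun (fun y hy => by simp only [max_eq_right hy.out.le])
    measurableSet_Ioi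

theorem integral_comp_max_norm_pi_fin_succ (ht : 0 ≤ t)
    (hf : Integrable fun z : Fin (n + 1) → ℝ => f (max t ‖z‖)) :
    ∫ z : Fin (n + 1) → ℝ, f (max t ‖z‖) =
      (2 * t) ^ (n + 1) * f t + (n + 1) * 2 ^ (n + 1) * ∫ y in Ioi t, y ^ n * f y := by
  have hsplit := integral_Ioi_pow_mul_comp_max n ht
    (integrableOn_pow_mul_comp_max_of_integrable_comp_max_norm hf)
  simp only [integral_fun_norm_pi_fin_succ n (fun y => f (max t y)), smul_eq_mul, hsplit]
  field_simp
  ring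

end SupNormShells

theorem hasDerivAt_of_integral_comp_max_norm {q : ℕ} {h g : ℝ → ℝ} {g' t : ℝ} (ht : 0 < t)
    (hmarg : ∀ s > 0, ∫ z : Fin q → ℝ, h (max s ‖z‖) = g s) (hg0 : ∀ s > 0, g s ≠ 0)
    (hh : DifferentiableOn ℝ h (Ioi 0)) (hg : HasDerivAt g g' t) :
    HasDerivAt h (g' / (2 * t) ^ q) t := by
  cases q with
  | zero =>
    rw [pow_zero, div_one]
    refine hg.congr_of_eventuallyEq ?_
    filter_upwards [Ioi_mem_nhds ht] with s hs
    rw [← hmarg s hs, Measure.volume_pi_eq_dirac 0, integral_dirac, norm_zero,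
      max_eq_left hs.out.le]
  | succ n =>
    have hint : ∀ s > 0, Integrable fun z : Fin (n + 1) → ℝ => h (max s ‖z‖) :=
      fun s hs => Integrable.of_integral_ne_zero (hmarg s hs ▸ hg0 s hs)
    have hF : HasDerivAt (fun s => ∫ y in Ioi s, y ^ n * h y) (-(t ^ n * h t)) t := by
      refine hasDerivAt_integral_Ioi_s19 (half_lt_self ht) ?_ ?_
      · exact integrableOn_Ioi_pow_mul_of_integrable_comp_max_norm (by positivity)
          (hint _ (by positivity))
      · exact (continuous_pow n).continuousOn.mul
          (hh.continuousOn.mono (Ioi_subset_Ioi (by positivity)))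
    have hsum : HasDerivAt
        (fun s => (2 * s) ^ (n + 1) * h s + (n + 1) * 2 ^ (n + 1) * ∫ y in Ioi s, y ^ n * h y)
        ((2 * t) ^ (n + 1) * deriv h t) t := by
      have hpow : HasDerivAt (fun s : ℝ => (2 * s) ^ (n + 1)) ((n + 1 : ℕ) * (2 * t) ^ n * 2) t :=
        by
        simpa using ((hasDerivAt_id t).const_mul 2).fun_pow (n + 1)
      exact ((hpow.mul (hh.differentiableAt (Ioi_mem_nhds ht)).hasDerivAt).add
        (hF.const_mul ((n + 1 : ℝ) * 2 ^ (n + 1)))).congr_deriv (by push_cast; ring)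
    have hg' : g' = (2 * t) ^ (n + 1) * deriv h t := by
      refine hg.unique (hsum.congr_of_eventuallyEq ?_)
      filter_upwards [Ioi_mem_nhds ht] with s hs
      rw [← hmarg s hs, integral_comp_max_norm_pi_fin_succ hs.le (hint s hs)]
    rw [hg', mul_div_cancel_left₀ _ (by positivity)]
    exact (hh.differentiableAt (Ioi_mem_nhds ht)).hasDerivAt

theorem hypercubic_contour_uniqueness_general (q : ℕ) (h : ℝ → ℝ)
    (hdiff : DifferentiableOn ℝ h (Set.Ici 0))
    (hlim : Tendsto h atTop (nhds 0))
    (hmarg : ∀ (i : Fin (q + 1)) (t : ℝ),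
      (∫ z : Fin q → ℝ, h ‖(i.insertNth t z : Fin (q + 1) → ℝ)‖) =
        (Real.sqrt (2 * Real.pi))⁻¹ * Real.exp (-t ^ 2 / 2)) :
    ∀ x : Fin (q + 1) → ℝ, x ≠ 0 →
      h ‖x‖ = ((2 : ℝ) ^ ((q + 1 : ℝ) - 1) * Real.sqrt (2 * Real.pi))⁻¹ *
        ∫ y in Set.Ioi ‖x‖, y ^ ((2 : ℝ) - (q + 1 : ℝ)) * Real.exp (-y ^ 2 / 2) := by
  intro x hx
  set φ : ℝ → ℝ := fun s => (Real.sqrt (2 * Real.pi))⁻¹ * Real.exp (-s ^ 2 / 2) with hφ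
  have hφ_pos (s : ℝ) : 0 < φ s := by positivity
  have hφ_deriv (s : ℝ) : HasDerivAt φ (-(s * φ s)) s :=
    ((((hasDerivAt_pow 2 s).neg).div_const 2).exp.const_mul _).congr_deriv
      (by simp only [φ, Pi.neg_apply]; ring)
  have hmarg_max : ∀ s > 0, ∫ z : Fin q → ℝ, h (max s ‖z‖) = φ s := fun s hs => by
    refine Eq.trans ?_ (hmarg 0 s)
    simp only [Fin.norm_insertNth, Real.norm_eq_abs, abs_of_pos hs]
  have hr : 0 < ‖x‖ := norm_pos_iff.2 hx
  have hderiv : ∀ y ∈ Ici ‖x‖, HasDerivAt h (-(y * φ y) / (2 * y) ^ q) y := fun y hy =>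
    hasDerivAt_of_integral_comp_max_norm (hr.trans_le hy) hmarg_max (fun s _ => (hφ_pos s).ne')
      (hdiff.mono Ioi_subset_Ici_self) (hφ_deriv y)
  have hftc := integral_Ioi_of_hasDerivAt_of_nonpos' hderiv
    (fun y hy => div_nonpos_of_nonpos_of_nonneg
      (neg_nonpos.2 (mul_nonneg (hr.trans hy).le (hφ_pos y).le))
      (pow_nonneg (by linarith [hr.trans hy]) q)) hlim
  have hkernel : ∀ y ∈ Ioi ‖x‖, -(y * φ y) / (2 * y) ^ q =
      -(((2 : ℝ) ^ ((q + 1 : ℝ) - 1) * Real.sqrt (2 * Real.pi))⁻¹ *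
        (y ^ ((2 : ℝ) - (q + 1 : ℝ)) * Real.exp (-y ^ 2 / 2))) := fun y hy => by
    have hy : 0 < y := hr.trans hy
    rw [add_sub_cancel_right, Real.rpow_natCast, show (2 : ℝ) - (q + 1) = 1 - q by ring,
      Real.rpow_sub hy, Real.rpow_one, Real.rpow_natCast, mul_pow, hφ]
    field_simp
  rw [setIntegral_congr_fun measurableSet_Ioi hkernel, integral_neg, integral_const_mul] at hftc
  linarith

/-- Hypercubically contoured densities with standard normal marginals are the Khintchine
mixture density. Stated in dimension `p = q + 1` (covering all integers `p ≥ 1`);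
`‖x‖` on `Fin (q + 1) → ℝ` is the sup norm `max_i |x i|`. -/
theorem hypercubic_contour_uniqueness (q : ℕ) (h : ℝ → ℝ)
    (hnn : ∀ y ≥ (0 : ℝ), 0 ≤ h y)
    (hdiff : DifferentiableOn ℝ h (Set.Ici 0))
    (hlim : Tendsto h atTop (nhds 0))
    (hdens : (∫ x : Fin (q + 1) → ℝ, h ‖x‖) = 1)
    (hmarg : ∀ (i : Fin (q + 1)) (t : ℝ),
      (∫ z : Fin q → ℝ, h ‖(i.insertNth t z : Fin (q + 1) → ℝ)‖) =
        (Real.sqrt (2 * Real.pi))⁻¹ * Real.exp (-t ^ 2 / 2)) :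
    ∀ x : Fin (q + 1) → ℝ, x ≠ 0 →
      h ‖x‖ = ((2 : ℝ) ^ ((q + 1 : ℝ) - 1) * Real.sqrt (2 * Real.pi))⁻¹ *
        ∫ y in Set.Ioi ‖x‖, y ^ ((2 : ℝ) - (q + 1 : ℝ)) * Real.exp (-y ^ 2 / 2) :=
  hypercubic_contour_uniqueness_general q h hdiff hlim hmarg
end
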